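/- arXiv:1404.0302 — 5 statements merged into one kernel-verified Lean document; each statement's English description precedes it below -/
import Mathlib

section
/- For μ > 0, x > 0, y ≥ 0, P_μ(x,y) = e^{-x} Σ_{n=0}^∞ (x^n/n!) P_{μ+n}(y), where P_ν(y) = γ(ν,y)/Γ(ν) is the regularized lower incomplete gamma function. -/
open Real MeasureTheory Set Filter

/-- Modified Bessel function of the first kind `I_ν(z)` (for positive real argument),
defined by its Maclaurin-type series. -/
noncomputable def besselI (ν z : ℝ) : ℝ :=
  ∑' n : ℕ, (z / 2) ^ (ν + 2 * (n : ℝ)) / ((Nat.factorial n : ℝ) * Real.Gamma (ν + (n : ℝ) + 1))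

/-- Generalized Marcum Q-function. -/
noncomputable def marcumQ (μ x y : ℝ) : ℝ :=
  x ^ ((1 - μ) / 2) *
    ∫ t in Set.Ioi y, t ^ ((μ - 1) / 2) * Real.exp (-t - x) * besselI (μ - 1) (2 * Real.sqrt (x * t))

/-- Complementary generalized Marcum P-function. -/
noncomputable def marcumP (μ x y : ℝ) : ℝ :=
  x ^ ((1 - μ) / 2) *
    ∫ t in Set.Ioc (0 : ℝ) y, t ^ ((μ - 1) / 2) * Real.exp (-t - x) * besselI (μ - 1) (2 * Real.sqrt (x * t))

/-- Lower incomplete gamma function `γ(ν, y)`. -/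
noncomputable def gammaLower (ν y : ℝ) : ℝ :=
  ∫ t in Set.Ioc (0 : ℝ) y, t ^ (ν - 1) * Real.exp (-t)

/-! Expanding `I_{μ-1}` in its power series turns the integrand of `P_μ(x, ·)` into
`x^{(μ-1)/2} e^{-x} ∑ₙ (xⁿ/n!) t^{μ+n-1} e^{-t} / Γ(μ+n)`. The `n`-th term integrates over
`(0, y]` to `(xⁿ/n!) γ(μ+n, y) / Γ(μ+n) ≤ xⁿ/n!`, so the series of integrals converges
absolutely and the integral can be taken term by term. -/

open Nat

lemma integrableOn_rpow_mul_exp_neg_Ioc {ν : ℝ} (hν : 0 < ν) (y : ℝ) :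
    IntegrableOn (fun t : ℝ => t ^ (ν - 1) * exp (-t)) (Ioc 0 y) :=
  ((GammaIntegral_convergent hν).mono_set Ioc_subset_Ioi_self).congr_fun
    (fun _ _ => mul_comm _ _) measurableSet_Ioc

lemma gammaLower_le_Gamma {ν : ℝ} (hν : 0 < ν) (y : ℝ) : gammaLower ν y ≤ Gamma ν := by
  rw [gammaLower, Gamma_eq_integral hν]
  simp_rw [mul_comm _ (exp _)]
  refine setIntegral_mono_set (GammaIntegral_convergent hν) ?_
    (.of_forall Ioc_subset_Ioi_self)
  filter_upwards [ae_restrict_mem measurableSet_Ioi] with t ht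
  exact mul_nonneg (exp_nonneg _) (rpow_nonneg ht.le _)

lemma besselI_two_mul_sqrt (ν : ℝ) {z : ℝ} (hz : 0 < z) :
    besselI ν (2 * √z) = z ^ (ν / 2) * ∑' n : ℕ, z ^ n / (n ! * Gamma (ν + n + 1)) := by
  rw [besselI, ← tsum_mul_left]
  refine tsum_congr fun n => ?_
  have hpow : (2 * √z / 2) ^ (ν + 2 * (n : ℝ)) = z ^ (ν / 2) * z ^ n := by
    rw [mul_div_cancel_left₀ _ two_ne_zero, sqrt_eq_rpow, ← rpow_mul hz.le, ← rpow_natCast,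
      ← rpow_add hz]
    ring_nf
  rw [hpow, mul_div_assoc]

lemma marcumP_integrand_eq_tsum (μ : ℝ) {x t : ℝ} (hx : 0 < x) (ht : 0 < t) :
    t ^ ((μ - 1) / 2) * exp (-t - x) * besselI (μ - 1) (2 * √(x * t)) =
      x ^ ((μ - 1) / 2) * exp (-x) *
        ∑' n : ℕ, x ^ n / n ! * (t ^ (μ + n - 1) * exp (-t) / Gamma (μ + n)) := by
  rw [besselI_two_mul_sqrt _ (mul_pos hx ht), ← tsum_mul_left, ← tsum_mul_left, ← tsum_mul_left]
  refine tsum_congr fun n => ?_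
  have ht_pow : t ^ (μ + n - 1) = t ^ ((μ - 1) / 2) * t ^ ((μ - 1) / 2) * t ^ n := by
    rw [← rpow_add ht, ← rpow_natCast, ← rpow_add ht]
    ring_nf
  rw [ht_pow, mul_rpow hx.le ht.le, mul_pow, show μ - 1 + n + 1 = μ + n by ring,
    sub_eq_add_neg (-t), exp_add]
  ring

lemma setIntegral_Ioc_tsum_gammaLower {μ x : ℝ} (hμ : 0 < μ) (hx : 0 ≤ x) (y : ℝ) :
    ∫ t in Ioc 0 y, ∑' n : ℕ, x ^ n / n ! * (t ^ (μ + n - 1) * exp (-t) / Gamma (μ + n)) =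
      ∑' n : ℕ, x ^ n / n ! * (gammaLower (μ + n) y / Gamma (μ + n)) := by
  have hμn (n : ℕ) : 0 < μ + n := by positivity
  have hint (n : ℕ) : IntegrableOn
      (fun t => x ^ n / n ! * (t ^ (μ + n - 1) * exp (-t) / Gamma (μ + n))) (Ioc 0 y) :=
    ((integrableOn_rpow_mul_exp_neg_Ioc (hμn n) y).div_const _).const_mul _
  have hval (n : ℕ) : ∫ t in Ioc 0 y, x ^ n / n ! * (t ^ (μ + n - 1) * exp (-t) / Gamma (μ + n)) =
      x ^ n / n ! * (gammaLower (μ + n) y / Gamma (μ + n)) := by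
    rw [integral_const_mul, integral_div, gammaLower]
  have hnorm (n : ℕ) : ∫ t in Ioc 0 y,
      ‖x ^ n / n ! * (t ^ (μ + n - 1) * exp (-t) / Gamma (μ + n))‖ =
      x ^ n / n ! * (gammaLower (μ + n) y / Gamma (μ + n)) := by
    rw [← hval]
    refine setIntegral_congr_fun measurableSet_Ioc fun t ht => norm_of_nonneg ?_
    have := Gamma_pos_of_pos (hμn n)
    have := rpow_nonneg ht.1.le (μ + n - 1)
    positivity
  have hsum : Summable fun n : ℕ => x ^ n / n ! * (gammaLower (μ + n) y / Gamma (μ + n)) := by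
    refine (Real.summable_pow_div_factorial x).of_nonneg_of_le (fun n => ?_) fun n => ?_
    · rw [← hnorm]; exact integral_nonneg fun _ => norm_nonneg _
    · refine mul_le_of_le_one_right (by positivity) ?_
      exact div_le_one_of_le₀ (gammaLower_le_Gamma (hμn n) y) (Gamma_pos_of_pos (hμn n)).le
  rw [← integral_tsum_of_summable_integral_norm hint (by simpa only [hnorm] using hsum)]
  exact tsum_congr hval

theorem marcumP_series_general (μ x y : ℝ) (hμ : 0 < μ) (hx : 0 < x) :
    marcumP μ x y =
      Real.exp (-x) *
        ∑' n : ℕ, x ^ n / (Nat.factorial n : ℝ) * (gammaLower (μ + n) y / Real.Gamma (μ + n)) := by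
  have hx_pow : x ^ ((1 - μ) / 2) * x ^ ((μ - 1) / 2) = 1 := by
    rw [← rpow_add hx, show (1 - μ) / 2 + (μ - 1) / 2 = 0 by ring, rpow_zero]
  rw [marcumP, setIntegral_congr_fun measurableSet_Ioc
      fun t ht => marcumP_integrand_eq_tsum μ hx ht.1,
    integral_const_mul, setIntegral_Ioc_tsum_gammaLower hμ hx.le, ← mul_assoc, ← mul_assoc,
    hx_pow, one_mul]

theorem marcumP_series (μ x y : ℝ) (hμ : 0 < μ) (hx : 0 < x) (hy : 0 ≤ y) :
    marcumP μ x y =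
      Real.exp (-x) *
        ∑' n : ℕ, x ^ n / (Nat.factorial n : ℝ) * (gammaLower (μ + n) y / Real.Gamma (μ + n)) :=
  marcumP_series_general μ x y hμ hx
end

section
/- For μ > 0, x > 0, y > 0, ∂Q_μ(x,y)/∂x = (y/x)^{μ/2} e^{-x-y} I_μ(2√(xy)), and consequently Q_μ(x,y) is strictly increasing in x. -/
/-!
Expanding `I_{μ-1}` and integrating term by term writes `Q_μ(x, y)` as the Poisson mixture
`∑ₙ e^{-x} xⁿ / n! · Q(μ + n, y)` of regularized upper incomplete gamma functions.
Differentiating the exponential generating function telescopes consecutive coefficients, and the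
recurrence `Q(s + 1, y) - Q(s, y) = y^s e^{-y} / Γ(s + 1)` turns the result into the series of
`I_μ(2√(xy))`, all of whose terms are positive.
-/

open Real MeasureTheory Set Filter

open scoped Nat Topology

noncomputable def upperIncGamma (s y : ℝ) : ℝ := ∫ t in Ioi y, exp (-t) * t ^ (s - 1)

noncomputable def upperIncGammaReg (s y : ℝ) : ℝ := upperIncGamma s y / Gamma s

noncomputable def egf (b : ℕ → ℝ) (x : ℝ) : ℝ := ∑' n, b n * x ^ n / n !

lemma sqrt_mul_rpow {a b : ℝ} (ha : 0 ≤ a) (hb : 0 ≤ b) (r : ℝ) :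
    √(a * b) ^ r = a ^ (r / 2) * b ^ (r / 2) := by
  rw [sqrt_eq_rpow, ← rpow_mul (mul_nonneg ha hb), mul_rpow ha hb, one_div_mul_eq_div]

section IncompleteGamma

variable {s y : ℝ}

lemma integrableOn_exp_neg_mul_rpow_Ioi (hs : 0 < s) (hy : 0 ≤ y) :
    IntegrableOn (fun t => exp (-t) * t ^ (s - 1)) (Ioi y) :=
  (GammaIntegral_convergent hs).mono_set (Ioi_subset_Ioi hy)

lemma upperIncGamma_nonneg (hy : 0 ≤ y) : 0 ≤ upperIncGamma s y :=
  setIntegral_nonneg measurableSet_Ioi fun _ ht =>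
    mul_nonneg (exp_pos _).le (rpow_nonneg (hy.trans (le_of_lt ht)) _)

lemma upperIncGamma_le_Gamma (hs : 0 < s) (hy : 0 ≤ y) : upperIncGamma s y ≤ Gamma s := by
  rw [Gamma_eq_integral hs]
  refine setIntegral_mono_set (GammaIntegral_convergent hs) ?_ (Ioi_subset_Ioi hy).eventuallyLE
  filter_upwards [ae_restrict_mem measurableSet_Ioi] with t ht
  exact mul_nonneg (exp_pos _).le (rpow_nonneg (le_of_lt ht) _)

lemma upperIncGamma_add_one (hs : 0 < s) (hy : 0 < y) :
    upperIncGamma (s + 1) y = s * upperIncGamma s y + y ^ s * exp (-y) := by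
  have hderiv : ∀ t ∈ Ici y, HasDerivAt (fun t => -(t ^ s * exp (-t)))
      (exp (-t) * t ^ (s + 1 - 1) - s * (exp (-t) * t ^ (s - 1))) t := by
    intro t ht
    have hpow := hasDerivAt_rpow_const (p := s) (Or.inl (hy.trans_le ht).ne')
    refine (hpow.mul (hasDerivAt_neg t).exp).neg.congr_deriv ?_
    rw [add_sub_cancel_right]
    ring
  have hint := integrableOn_exp_neg_mul_rpow_Ioi hs hy.le
  have hint' := integrableOn_exp_neg_mul_rpow_Ioi (s := s + 1) (by linarith) hy.le
  have hlim : Tendsto (fun t => -(t ^ s * exp (-t))) atTop (𝓝 0) := by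
    simpa using (tendsto_rpow_mul_exp_neg_mul_atTop_nhds_zero s 1 one_pos).neg
  have hparts := integral_Ioi_of_hasDerivAt_of_tendsto' hderiv (hint'.sub (hint.const_mul s)) hlim
  rw [integral_sub hint' (hint.const_mul s), integral_const_mul] at hparts
  rw [upperIncGamma, upperIncGamma]
  linarith

lemma upperIncGammaReg_mem_Icc (hs : 0 < s) (hy : 0 ≤ y) : upperIncGammaReg s y ∈ Icc 0 1 :=
  ⟨div_nonneg (upperIncGamma_nonneg hy) (Gamma_pos_of_pos hs).le,
    div_le_one_of_le₀ (upperIncGamma_le_Gamma hs hy) (Gamma_pos_of_pos hs).le⟩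

lemma upperIncGammaReg_add_one_sub (hs : 0 < s) (hy : 0 < y) :
    upperIncGammaReg (s + 1) y - upperIncGammaReg s y = y ^ s * exp (-y) / Gamma (s + 1) := by
  have hΓ : Gamma s ≠ 0 := (Gamma_pos_of_pos hs).ne'
  rw [upperIncGammaReg, upperIncGammaReg, upperIncGamma_add_one hs hy, Gamma_add_one hs.ne']
  field_simp
  ring

lemma rpow_mul_exp_neg_div_Gamma_add_one_le_one (hs : 0 < s) (hy : 0 < y) :
    y ^ s * exp (-y) / Gamma (s + 1) ≤ 1 := by
  rw [← upperIncGammaReg_add_one_sub hs hy]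
  have h₁ := upperIncGammaReg_mem_Icc (s := s + 1) (by linarith) hy.le
  have h₀ := upperIncGammaReg_mem_Icc hs hy.le
  linarith [h₁.2, h₀.1]

lemma abs_upperIncGammaReg_le_one (hs : 0 < s) (hy : 0 ≤ y) : |upperIncGammaReg s y| ≤ 1 := by
  have h := upperIncGammaReg_mem_Icc hs hy
  exact abs_le.mpr ⟨by linarith [h.1], h.2⟩

end IncompleteGamma

section ExponentialGeneratingFunction

variable {b c : ℕ → ℝ} {B C : ℝ}

lemma summable_mul_pow_div_factorial (hb : ∀ n, |b n| ≤ B) (x : ℝ) :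
    Summable fun n => b n * x ^ n / n ! :=
  .of_norm_bounded ((summable_pow_div_factorial |x|).mul_left B) fun n => by
    rw [norm_eq_abs, abs_div, abs_mul, abs_pow, Nat.abs_cast, mul_div_assoc]
    exact mul_le_mul_of_nonneg_right (hb n) (by positivity)

lemma succ_mul_pow_div_factorial_succ (a x : ℝ) (n : ℕ) :
    a * ((n + 1 : ℕ) * x ^ (n + 1 - 1)) / (n + 1)! = a * x ^ n / n ! := by
  rw [Nat.add_sub_cancel, Nat.factorial_succ]
  push_cast
  field_simp

lemma summable_mul_deriv_pow_div_factorial (hb : ∀ n, |b n| ≤ B) (x : ℝ) :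
    Summable fun n => b n * (n * x ^ (n - 1)) / n ! := by
  rw [← summable_nat_add_iff 1]
  simpa only [succ_mul_pow_div_factorial_succ] using
    summable_mul_pow_div_factorial (fun n => hb (n + 1)) x

lemma hasDerivAt_egf (hb : ∀ n, |b n| ≤ B) (x : ℝ) :
    HasDerivAt (egf b) (egf (fun n => b (n + 1)) x) x := by
  have hB : 0 ≤ B := (abs_nonneg _).trans (hb 0)
  have hx : x ∈ Ioo (-(|x| + 1)) (|x| + 1) := abs_lt.mp (lt_add_one _)
  have hterm : ∀ n z, HasDerivAt (fun z => b n * z ^ n / n !) (b n * (n * z ^ (n - 1)) / n !) z :=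
    fun n z => ((hasDerivAt_pow n z).const_mul (b n)).div_const _
  have hbound : ∀ n, ∀ z ∈ Ioo (-(|x| + 1)) (|x| + 1),
      ‖b n * (n * z ^ (n - 1)) / (n ! : ℝ)‖ ≤ B * (n * (|x| + 1) ^ (n - 1)) / n ! := by
    intro n z hz
    rw [norm_eq_abs, abs_div, abs_mul, abs_mul, abs_pow, Nat.abs_cast, Nat.abs_cast]
    gcongr
    exacts [hb n, (abs_lt.mpr hz).le]
  have hderiv := hasDerivAt_tsum_of_isPreconnected
    (summable_mul_deriv_pow_div_factorial (b := fun _ => B) (fun _ => (abs_of_nonneg hB).le) _)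
    isOpen_Ioo (convex_Ioo _ _).isPreconnected (fun n z _ => hterm n z) hbound hx
    (summable_mul_pow_div_factorial hb x) hx
  refine hderiv.congr_deriv ?_
  rw [(summable_mul_deriv_pow_div_factorial hb x).tsum_eq_zero_add]
  simp only [egf, succ_mul_pow_div_factorial_succ]
  simp

lemma egf_sub (hb : ∀ n, |b n| ≤ B) (hc : ∀ n, |c n| ≤ C) (x : ℝ) :
    egf (fun n => b n - c n) x = egf b x - egf c x := by
  rw [egf, egf, egf, ← (summable_mul_pow_div_factorial hb x).tsum_sub
    (summable_mul_pow_div_factorial hc x)]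
  simp only [sub_mul, sub_div]

lemma egf_pos (hb : ∀ n, |b n| ≤ B) (hpos : ∀ n, 0 < b n) {x : ℝ} (hx : 0 ≤ x) :
    0 < egf b x :=
  (summable_mul_pow_div_factorial hb x).tsum_pos
    (fun n => div_nonneg (mul_nonneg (hpos n).le (pow_nonneg hx n)) n.factorial.cast_nonneg) 0
    (by simpa using hpos 0)

end ExponentialGeneratingFunction

section MarcumQ

variable {μ x y : ℝ}

lemma marcumQ_integrand_eq_tsum {t : ℝ} (hx : 0 < x) (ht : 0 < t) :
    x ^ ((1 - μ) / 2) * (t ^ ((μ - 1) / 2) * exp (-t - x) * besselI (μ - 1) (2 * √(x * t))) =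
      ∑' n : ℕ, exp (-x) * x ^ n / (n ! * Gamma (μ + n)) * (exp (-t) * t ^ (μ + n - 1)) := by
  rw [besselI, ← tsum_mul_left, ← tsum_mul_left]
  refine tsum_congr fun n => ?_
  have hx' : x ^ ((1 - μ) / 2) * x ^ ((μ - 1 + 2 * n) / 2) = x ^ n := by
    rw [← rpow_add hx, ← rpow_natCast]
    ring_nf
  have ht' : t ^ ((μ - 1) / 2) * t ^ ((μ - 1 + 2 * n) / 2) = t ^ (μ + n - 1) := by
    rw [← rpow_add ht]
    ring_nf
  have hexp : exp (-t - x) = exp (-t) * exp (-x) := by rw [← exp_add, sub_eq_add_neg]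
  rw [mul_div_cancel_left₀ _ two_ne_zero, sqrt_mul_rpow hx.le ht.le, ← hx', ← ht',
    show μ - 1 + n + 1 = μ + n by ring, hexp]
  ring

lemma marcumQ_eq_exp_mul_egf (hμ : 0 < μ) (hx : 0 < x) (hy : 0 ≤ y) :
    marcumQ μ x y = exp (-x) * egf (fun n => upperIncGammaReg (μ + n) y) x := by
  set F : ℕ → ℝ → ℝ := fun n t =>
    exp (-x) * x ^ n / (n ! * Gamma (μ + n)) * (exp (-t) * t ^ (μ + n - 1))
  have hF_int : ∀ n, IntegrableOn (F n) (Ioi y) := fun n =>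
    (integrableOn_exp_neg_mul_rpow_Ioi (by positivity) hy).const_mul _
  have hF_integral : ∀ n, ∫ t in Ioi y, F n t =
      exp (-x) * (upperIncGammaReg (μ + n) y * x ^ n / n !) := fun n => by
    rw [integral_const_mul, upperIncGammaReg, upperIncGamma]
    ring
  have hF_norm : ∀ n, ∫ t in Ioi y, ‖F n t‖ = ∫ t in Ioi y, F n t := fun n =>
    setIntegral_congr_fun measurableSet_Ioi fun t ht => by
      have ht : 0 < t := hy.trans_lt ht
      exact norm_of_nonneg (by positivity)
  have hF_sum : Summable fun n => ∫ t in Ioi y, ‖F n t‖ := by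
    simp_rw [hF_norm, hF_integral]
    exact (summable_mul_pow_div_factorial
      (fun n => abs_upperIncGammaReg_le_one (by positivity) hy) x).mul_left _
  rw [marcumQ, ← integral_const_mul, setIntegral_congr_fun measurableSet_Ioi fun t ht =>
    marcumQ_integrand_eq_tsum hx (hy.trans_lt ht), ← integral_tsum_of_summable_integral_norm
    hF_int hF_sum, egf, ← tsum_mul_left]
  exact tsum_congr hF_integral

lemma hasDerivAt_marcumQ (hμ : 0 < μ) (hx : 0 < x) (hy : 0 < y) :
    HasDerivAt (fun x' => marcumQ μ x' y)
      (exp (-x) * egf (fun n => y ^ (μ + n) * exp (-y) / Gamma (μ + n + 1)) x) x := by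
  set b : ℕ → ℝ := fun n => upperIncGammaReg (μ + n) y
  have hb : ∀ n, |b n| ≤ 1 := fun n => abs_upperIncGammaReg_le_one (by positivity) hy.le
  have hcoef : (fun n : ℕ => y ^ (μ + n) * exp (-y) / Gamma (μ + n + 1)) =
      fun n => b (n + 1) - b n := funext fun n => by
    rw [← upperIncGammaReg_add_one_sub (by positivity) hy]
    simp only [b, Nat.cast_succ, add_assoc]
  have hQ : (fun x' => marcumQ μ x' y) =ᶠ[𝓝 x] fun x' => exp (-x') * egf b x' :=
    eventually_of_mem (Ioi_mem_nhds hx) fun x' hx' => marcumQ_eq_exp_mul_egf hμ hx' hy.le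
  have hderiv := ((hasDerivAt_neg x).exp.mul (hasDerivAt_egf hb x)).congr_of_eventuallyEq hQ
  refine hderiv.congr_deriv ?_
  rw [hcoef, egf_sub (fun n => hb (n + 1)) hb]
  ring

lemma exp_mul_egf_eq_besselI (hx : 0 < x) (hy : 0 < y) :
    exp (-x) * egf (fun n => y ^ (μ + n) * exp (-y) / Gamma (μ + n + 1)) x =
      (y / x) ^ (μ / 2) * exp (-x - y) * besselI μ (2 * √(x * y)) := by
  rw [egf, besselI, ← tsum_mul_left, ← tsum_mul_left]
  refine tsum_congr fun n => ?_
  have hx' : x ^ ((μ + 2 * n) / 2) = x ^ (μ / 2) * x ^ n := by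
    rw [← rpow_natCast, ← rpow_add hx]
    ring_nf
  have hy' : y ^ (μ / 2) * y ^ ((μ + 2 * n) / 2) = y ^ (μ + n) := by
    rw [← rpow_add hy]
    ring_nf
  have hxμ : x ^ (μ / 2) ≠ 0 := (rpow_pos_of_pos hx _).ne'
  rw [mul_div_cancel_left₀ _ two_ne_zero, sqrt_mul_rpow hx.le hy.le, hx', ← hy',
    div_rpow hy.le hx.le, sub_eq_add_neg, exp_add]
  field_simp

end MarcumQ

theorem marcumQ_deriv_x (μ x y : ℝ) (hμ : 0 < μ) (hx : 0 < x) (hy : 0 < y) :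
    deriv (fun x' => marcumQ μ x' y) x =
        (y / x) ^ (μ / 2) * Real.exp (-x - y) * besselI μ (2 * Real.sqrt (x * y)) ∧
      StrictMonoOn (fun x' => marcumQ μ x' y) (Set.Ioi 0) := by
  set d : ℕ → ℝ := fun n => y ^ (μ + n) * exp (-y) / Gamma (μ + n + 1)
  have hderiv : ∀ x' > 0, HasDerivAt (fun x' => marcumQ μ x' y) (exp (-x') * egf d x') x' :=
    fun x' hx' => hasDerivAt_marcumQ hμ hx' hy
  have hd_pos : ∀ n, 0 < d n := fun n => by positivity
  have hd_le : ∀ n, |d n| ≤ 1 := fun n => (abs_of_pos (hd_pos n)).trans_le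
    (rpow_mul_exp_neg_div_Gamma_add_one_le_one (by positivity) hy)
  refine ⟨(hderiv x hx).deriv.trans (exp_mul_egf_eq_besselI hx hy),
    strictMonoOn_of_deriv_pos (convex_Ioi 0)
      (fun x' hx' => (hderiv x' hx').continuousAt.continuousWithinAt) fun x' hx' => ?_⟩
  rw [interior_Ioi] at hx'
  rw [(hderiv x' hx').deriv]
  exact mul_pos (exp_pos _) (egf_pos hd_le hd_pos (le_of_lt hx'))
end

section
/- The Bessel function ratio c_ν(x,y) = √(y/x) · I_ν(2√(xy))/I_{ν−1}(2√(xy)) is, for fixed ν ≥ 1 and y > 0, a decreasing function of x on (0,∞), and for fixed x > 0 an increasing function of y; moreover lim_{x→0⁺} c_ν(x,y) = y/ν. -/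
open Real MeasureTheory Set Filter

/-- Bessel-function ratio `c_ν(x,y) = √(y/x) I_ν(2√(xy))/I_{ν−1}(2√(xy))`. -/
noncomputable def besselRatioC (ν x y : ℝ) : ℝ :=
  Real.sqrt (y / x) * besselI ν (2 * Real.sqrt (x * y)) / besselI (ν - 1) (2 * Real.sqrt (x * y))

/-!
With `u = xy` and `S_μ(u) = ∑ uⁿ / (n! Γ(μ + n + 1))`, so that `I_μ(2√u) = u^{μ/2} S_μ(u)`, we have
`c_ν(x, y) = y S_ν(u) / S_{ν-1}(u)`. If two power series with nonnegative coefficients `aₙ, bₙ`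
have `aₙ / bₙ` strictly decreasing, then `A(u) / B(u)` is strictly decreasing on `[0, ∞)`:
symmetrizing the double series of `A(s) B(t) - A(t) B(s)` leaves the nonnegative terms
`(aₘ bₙ - aₙ bₘ)(sᵐ tⁿ - tᵐ sⁿ)`. For `S_ν / S_{ν-1}` the coefficient ratio is `1 / (ν + n)`;
for `u S_ν(u) / S_{ν-1}(u) = x c_ν(x, y)` it is `n`, since `u S_ν(u) = ∑ n aₙ uⁿ` with `aₙ` the
coefficients of `S_{ν-1}`. The limit is `y S_ν(0) / S_{ν-1}(0) = y Γ(ν) / Γ(ν + 1)`.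
-/

open scoped Topology Nat

noncomputable def besselCoeff (μ : ℝ) (n : ℕ) : ℝ :=
  ((n ! : ℝ) * Gamma (μ + n + 1))⁻¹

noncomputable def besselSeries (μ t : ℝ) : ℝ :=
  ∑' n : ℕ, besselCoeff μ n * t ^ n

theorem pow_mul_pow_le_pow_mul_pow {R : Type*} [CommSemiring R] [PartialOrder R] [IsOrderedRing R]
    {s t : R} (hs : 0 ≤ s) (hst : s ≤ t) {m n : ℕ} (hmn : m ≤ n) :
    t ^ m * s ^ n ≤ s ^ m * t ^ n := by
  obtain ⟨k, rfl⟩ := Nat.exists_eq_add_of_le hmn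
  calc t ^ m * s ^ (m + k) = s ^ m * t ^ m * s ^ k := by ring
    _ ≤ s ^ m * t ^ m * t ^ k :=
      mul_le_mul_of_nonneg_left (pow_le_pow_left₀ hs hst k)
        (mul_nonneg (pow_nonneg hs m) (pow_nonneg (hs.trans hst) m))
    _ = s ^ m * t ^ (m + k) := by ring

theorem cross_mul_pow_sub_nonneg {a b : ℕ → ℝ} (hab : ∀ m n, m ≤ n → a n * b m ≤ a m * b n)
    {s t : ℝ} (hs : 0 ≤ s) (hst : s ≤ t) (m n : ℕ) :
    0 ≤ (a m * b n - a n * b m) * (s ^ m * t ^ n - t ^ m * s ^ n) := by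
  rcases le_total m n with h | h
  · exact mul_nonneg (sub_nonneg.2 (hab m n h))
      (sub_nonneg.2 (pow_mul_pow_le_pow_mul_pow hs hst h))
  · refine mul_nonneg_of_nonpos_of_nonpos (sub_nonpos.2 (hab n m h)) (sub_nonpos.2 ?_)
    linarith [pow_mul_pow_le_pow_mul_pow hs hst h]

theorem tsum_mul_pow_cross_lt {a b : ℕ → ℝ} (ha : 0 ≤ a) (hb : 0 ≤ b)
    (hab : ∀ m n, m < n → a n * b m < a m * b n) {s t : ℝ} (hs : 0 ≤ s) (hst : s < t)
    (hat : Summable fun n => a n * t ^ n) (hbt : Summable fun n => b n * t ^ n) :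
    (∑' n, a n * t ^ n) * ∑' n, b n * s ^ n < (∑' n, a n * s ^ n) * ∑' n, b n * t ^ n := by
  have ht : 0 ≤ t := hs.trans hst.le
  have hdom : ∀ {c : ℕ → ℝ}, 0 ≤ c → Summable (fun n => c n * t ^ n) →
      Summable fun n => c n * s ^ n := fun hc hct =>
    hct.of_nonneg_of_le (fun n => mul_nonneg (hc n) (pow_nonneg hs n))
      fun n => mul_le_mul_of_nonneg_left (pow_le_pow_left₀ hs hst.le n) (hc n)
  have hprod : ∀ {c : ℕ → ℝ} {u v : ℝ}, 0 ≤ c → 0 ≤ u → 0 ≤ v → Summable (fun n => a n * u ^ n) →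
      Summable (fun n => c n * v ^ n) →
      HasSum (fun p : ℕ × ℕ => a p.1 * u ^ p.1 * (c p.2 * v ^ p.2))
        ((∑' n, a n * u ^ n) * ∑' n, c n * v ^ n) := fun hc hu hv hau hcv =>
    hau.hasSum.mul hcv.hasSum <| hau.mul_of_nonneg hcv
      (fun n => mul_nonneg (ha n) (pow_nonneg hu n)) fun n => mul_nonneg (hc n) (pow_nonneg hv n)
  set F : ℕ × ℕ → ℝ := fun p => a p.1 * b p.2 * (s ^ p.1 * t ^ p.2 - t ^ p.1 * s ^ p.2) with hF_def
  have hF : HasSum F ((∑' n, a n * s ^ n) * (∑' n, b n * t ^ n) -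
      (∑' n, a n * t ^ n) * ∑' n, b n * s ^ n) := by
    refine ((hprod hb hs ht (hdom ha hat) hbt).sub (hprod hb ht hs hat (hdom hb hbt))).congr_fun
      fun p => ?_
    simp only [hF_def]; ring
  have hsym := hF.add ((Equiv.prodComm ℕ ℕ).hasSum_iff.2 hF)
  have hterm : ∀ m n : ℕ, F (m, n) + F (m, n).swap =
      (a m * b n - a n * b m) * (s ^ m * t ^ n - t ^ m * s ^ n) := fun m n => by
    simp only [hF_def, Prod.swap_prod_mk]; ring
  have hnonneg : ∀ p : ℕ × ℕ, 0 ≤ F p + F p.swap := fun ⟨m, n⟩ =>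
    hterm m n ▸ cross_mul_pow_sub_nonneg (fun m n h => h.eq_or_lt.elim (fun e => e ▸ le_rfl)
      fun h => (hab m n h).le) hs hst.le m n
  have hpos : 0 < F (0, 1) + F (0, 1).swap := by
    rw [hterm]
    simpa using mul_pos (sub_pos.2 (hab 0 1 one_pos)) (sub_pos.2 hst)
  have hlt := hasSum_lt (f := 0) (g := fun p => F p + F p.swap) hnonneg hpos hasSum_zero hsym
  linarith

theorem besselCoeff_pos {μ : ℝ} (hμ : -1 < μ) (n : ℕ) : 0 < besselCoeff μ n := by
  have : 0 < μ + n + 1 := by linarith [n.cast_nonneg (α := ℝ)]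
  exact inv_pos.2 (mul_pos (by positivity) (Gamma_pos_of_pos this))

theorem summable_besselSeries (μ t : ℝ) : Summable fun n => besselCoeff μ n * t ^ n := by
  refine .of_norm_bounded_eventually_nat (Real.summable_pow_div_factorial |t|) ?_
  filter_upwards [eventually_ge_atTop ⌈1 - μ⌉₊] with n hn
  have h2 : 2 ≤ μ + n + 1 := by linarith [Nat.ceil_le.1 hn]
  have hΓ : 1 ≤ Gamma (μ + n + 1) := by
    simpa using Gamma_strictMonoOn_Ici.monotoneOn self_mem_Ici h2 h2
  rw [norm_mul, norm_pow, Real.norm_eq_abs, Real.norm_eq_abs, besselCoeff,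
    abs_of_nonneg (inv_nonneg.2 (mul_nonneg (by positivity) (by linarith))), div_eq_inv_mul]
  gcongr
  exact le_mul_of_one_le_right (by positivity) hΓ

theorem besselSeries_pos {μ t : ℝ} (hμ : -1 < μ) (ht : 0 ≤ t) : 0 < besselSeries μ t :=
  (summable_besselSeries μ t).tsum_pos
    (fun n => mul_nonneg (besselCoeff_pos hμ n).le (pow_nonneg ht n)) 0
    (by simpa using besselCoeff_pos hμ 0)

theorem besselSeries_zero (μ : ℝ) : besselSeries μ 0 = (Gamma (μ + 1))⁻¹ := by
  rw [besselSeries, tsum_eq_single 0 fun n hn => by simp [hn]]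
  simp [besselCoeff]

theorem continuous_besselSeries (μ : ℝ) : Continuous (besselSeries μ) := by
  refine continuous_iff_continuousAt.2 fun x => ?_
  have hr : Icc (-(|x| + 1)) (|x| + 1) ∈ 𝓝 x :=
    Icc_mem_nhds (by linarith [neg_abs_le x]) (by linarith [le_abs_self x])
  refine (continuousOn_tsum (fun n => by fun_prop) (summable_besselSeries μ (|x| + 1)).abs
    fun n y hy => ?_).continuousAt hr
  rw [norm_mul, norm_pow, abs_mul, abs_pow, Real.norm_eq_abs, Real.norm_eq_abs]
  exact mul_le_mul_of_nonneg_left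
    (pow_le_pow_left₀ (abs_nonneg y) ((abs_le.2 hy).trans (le_abs_self _)) n) (abs_nonneg _)

theorem besselI_two_mul_sqrt_s11 (μ : ℝ) {z : ℝ} (hz : 0 < z) :
    besselI μ (2 * √z) = z ^ (μ / 2) * besselSeries μ z := by
  rw [besselI, besselSeries, ← tsum_mul_left]
  congr 1; funext n
  rw [mul_div_cancel_left₀ _ two_ne_zero, sqrt_eq_rpow, ← rpow_mul hz.le,
    show 1 / 2 * (μ + 2 * n) = μ / 2 + n by ring, rpow_add hz, rpow_natCast, besselCoeff,
    div_eq_mul_inv]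
  ring

theorem besselRatioC_eq (ν : ℝ) {x y : ℝ} (hx : 0 < x) (hy : 0 < y) :
    besselRatioC ν x y = y * besselSeries ν (x * y) / besselSeries (ν - 1) (x * y) := by
  have hxy : 0 < x * y := mul_pos hx hy
  have hpow : √(y / x) * (x * y) ^ (ν / 2) = y * (x * y) ^ ((ν - 1) / 2) := by
    rw [show ν / 2 = 1 / 2 + (ν - 1) / 2 by ring, rpow_add hxy, ← sqrt_eq_rpow, ← mul_assoc,
      ← sqrt_mul (div_nonneg hy.le hx.le), show y / x * (x * y) = y * y by field_simp,
      sqrt_mul_self hy.le]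
  rw [besselRatioC, besselI_two_mul_sqrt_s11 _ hxy, besselI_two_mul_sqrt_s11 _ hxy, ← mul_assoc, hpow,
    mul_assoc, mul_left_comm y, mul_div_mul_left _ _ (rpow_pos_of_pos hxy _).ne']

theorem besselCoeff_sub_one {ν : ℝ} (hν : 0 < ν) (n : ℕ) :
    besselCoeff (ν - 1) n = (ν + n) * besselCoeff ν n := by
  have hνn : 0 < ν + n := by positivity
  rw [besselCoeff, besselCoeff, show ν - 1 + n + 1 = ν + n by ring, Gamma_add_one hνn.ne']
  have := (Gamma_pos_of_pos hνn).ne'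
  field_simp

theorem succ_mul_besselCoeff_succ (ν : ℝ) (n : ℕ) :
    ((n : ℝ) + 1) * besselCoeff (ν - 1) (n + 1) = besselCoeff ν n := by
  rw [besselCoeff, besselCoeff, Nat.factorial_succ, Nat.cast_mul, Nat.cast_succ,
    show ν - 1 + ((n : ℝ) + 1) + 1 = ν + n + 1 by ring, mul_assoc, mul_inv,
    mul_inv_cancel_left₀ (by positivity)]

theorem hasSum_natCast_mul_besselCoeff (ν u : ℝ) :
    HasSum (fun n : ℕ => n * besselCoeff (ν - 1) n * u ^ n) (u * besselSeries ν u) := by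
  have hshift : HasSum (fun n : ℕ => ((n + 1 : ℕ) : ℝ) * besselCoeff (ν - 1) (n + 1) * u ^ (n + 1))
      (u * besselSeries ν u) :=
    ((summable_besselSeries ν u).hasSum.mul_left u).congr_fun fun n => by
      rw [Nat.cast_succ, ← succ_mul_besselCoeff_succ ν n, pow_succ]; ring
  simpa using HasSum.zero_add (f := fun n : ℕ => n * besselCoeff (ν - 1) n * u ^ n) hshift

theorem strictAntiOn_besselSeries_div {ν : ℝ} (hν : 0 < ν) :
    StrictAntiOn (fun u => besselSeries ν u / besselSeries (ν - 1) u) (Ici 0) := by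
  intro s hs t ht hst
  have hν' : -1 < ν - 1 := by linarith
  have hν₁ : -1 < ν := by linarith
  rw [div_lt_div_iff₀ (besselSeries_pos hν' ht) (besselSeries_pos hν' hs)]
  refine tsum_mul_pow_cross_lt (fun n => (besselCoeff_pos hν₁ n).le)
    (fun n => (besselCoeff_pos hν' n).le) (fun m n hmn => ?_) hs hst
    (summable_besselSeries ν t) (summable_besselSeries (ν - 1) t)
  rw [besselCoeff_sub_one hν, besselCoeff_sub_one hν]
  nlinarith [mul_lt_mul_of_pos_right (Nat.cast_lt.2 hmn : (m : ℝ) < n)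
    (mul_pos (besselCoeff_pos hν₁ m) (besselCoeff_pos hν₁ n))]

theorem strictMonoOn_mul_besselSeries_div {ν : ℝ} (hν : 0 < ν) :
    StrictMonoOn (fun u => u * besselSeries ν u / besselSeries (ν - 1) u) (Ici 0) := by
  intro s hs t ht hst
  have hν' : -1 < ν - 1 := by linarith
  have hpos := besselCoeff_pos hν'
  rw [div_lt_div_iff₀ (besselSeries_pos hν' hs) (besselSeries_pos hν' ht)]
  have key := tsum_mul_pow_cross_lt (a := besselCoeff (ν - 1))
    (b := fun n => n * besselCoeff (ν - 1) n)
    (fun n => (hpos n).le) (fun n => mul_nonneg n.cast_nonneg (hpos n).le)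
    (fun m n hmn => by nlinarith [mul_pos (hpos m) (hpos n), (Nat.cast_lt.2 hmn : (m : ℝ) < n)])
    hs hst (summable_besselSeries _ t) (hasSum_natCast_mul_besselCoeff ν t).summable
  rw [(hasSum_natCast_mul_besselCoeff ν s).tsum_eq,
    (hasSum_natCast_mul_besselCoeff ν t).tsum_eq] at key
  change besselSeries (ν - 1) t * _ < besselSeries (ν - 1) s * _ at key
  linarith

theorem strictAntiOn_besselRatioC_left {ν y : ℝ} (hν : 0 < ν) (hy : 0 < y) :
    StrictAntiOn (fun x => besselRatioC ν x y) (Ioi 0) := by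
  intro x₁ hx₁ x₂ hx₂ hx
  simp only [besselRatioC_eq ν hx₁ hy, besselRatioC_eq ν hx₂ hy, mul_div_assoc]
  exact mul_lt_mul_of_pos_left (strictAntiOn_besselSeries_div hν (mem_Ici.2 (mul_pos hx₁ hy).le)
    (mem_Ici.2 (mul_pos hx₂ hy).le) (mul_lt_mul_of_pos_right hx hy)) hy

theorem strictMonoOn_besselRatioC_right {ν x : ℝ} (hν : 0 < ν) (hx : 0 < x) :
    StrictMonoOn (fun y => besselRatioC ν x y) (Ioi 0) := by
  have hdiv : ∀ {y : ℝ}, 0 < y → besselRatioC ν x y =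
      x * y * besselSeries ν (x * y) / besselSeries (ν - 1) (x * y) / x := fun hy => by
    rw [besselRatioC_eq ν hx hy]; field_simp
  intro y₁ hy₁ y₂ hy₂ hy
  simp only [hdiv hy₁, hdiv hy₂]
  exact div_lt_div_of_pos_right (strictMonoOn_mul_besselSeries_div hν
    (mem_Ici.2 (mul_pos hx hy₁).le) (mem_Ici.2 (mul_pos hx hy₂).le)
    (mul_lt_mul_of_pos_left hy hx)) hx

theorem tendsto_besselRatioC_nhdsGT_zero {ν y : ℝ} (hν : 0 < ν) (hy : 0 < y) :
    Tendsto (fun x => besselRatioC ν x y) (𝓝[>] 0) (𝓝 (y / ν)) := by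
  have hS : ∀ μ, Tendsto (fun x => besselSeries μ (x * y)) (𝓝[>] 0) (𝓝 (Gamma (μ + 1))⁻¹) :=
    fun μ => besselSeries_zero μ ▸ ((continuous_besselSeries μ).tendsto' 0 _ rfl).comp
      (((continuous_id.mul continuous_const).tendsto' 0 0 (zero_mul y)).mono_left
        nhdsWithin_le_nhds)
  have hΓ := (Gamma_pos_of_pos hν).ne'
  have hlim := ((hS ν).const_mul y).div (hS (ν - 1)) (by simpa using hΓ)
  rw [sub_add_cancel, Gamma_add_one hν.ne',
    show y * (ν * Gamma ν)⁻¹ / (Gamma ν)⁻¹ = y / ν by field_simp] at hlim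
  exact hlim.congr' (eventually_nhdsWithin_of_forall fun x hx => (besselRatioC_eq ν hx hy).symm)

theorem besselRatioC_monotonicity (ν : ℝ) (hν : 1 ≤ ν) :
    (∀ y : ℝ, 0 < y → StrictAntiOn (fun x => besselRatioC ν x y) (Set.Ioi 0)) ∧
    (∀ x : ℝ, 0 < x → StrictMonoOn (fun y => besselRatioC ν x y) (Set.Ioi 0)) ∧
    (∀ y : ℝ, 0 < y →
      Filter.Tendsto (fun x => besselRatioC ν x y) (nhdsWithin 0 (Set.Ioi 0)) (nhds (y / ν))) := by
  have hν₀ : 0 < ν := by linarith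
  exact ⟨fun _ hy => strictAntiOn_besselRatioC_left hν₀ hy,
    fun _ hx => strictMonoOn_besselRatioC_right hν₀ hx,
    fun _ hy => tendsto_besselRatioC_nhdsGT_zero hν₀ hy⟩
end

section
/- Let x > 0 be fixed, ξ = 2√(xy), and define g(y) = x + y − √(1+4xy) + ln((1+√(1+4xy))/(2y)) for y > 0. Then g'(y) = (y − 2xy − 1 + (y−1)√(1+4xy)) / (y(1+√(1+4xy))), g(x+1) = g'(x+1) = 0, and g is convex on (0,∞); in particular g(y) ≥ 0 with equality only at y = x + 1. -/
/-!
Differentiating, `g'(y) = 1 - 2x / (1 + √(1 + 4xy)) - 1/y`, which is visibly strictly increasing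
in `y > 0`, so `g` is strictly convex there. At `y = x + 1` the radicand is the square `(2x + 1)²`,
and both `g` and `g'` vanish; a strictly convex function has a strict global minimum at a critical
point.
-/

open Real Set

noncomputable def marcumG (x y : ℝ) : ℝ :=
  x + y - √(1 + 4 * x * y) + log ((1 + √(1 + 4 * x * y)) / (2 * y))

lemma StrictConvexOn.lt_of_hasDerivAt_eq_zero {S : Set ℝ} {f : ℝ → ℝ} {c y : ℝ}
    (hf : StrictConvexOn ℝ S f) (hc : c ∈ S) (hy : y ∈ S) (hyc : y ≠ c)
    (hf' : HasDerivAt f 0 c) : f c < f y := by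
  rcases hyc.lt_or_gt with hlt | hgt
  · have := hf.slope_lt_of_hasDerivAt hy hc hlt hf'
    rw [slope_def_field, div_lt_iff₀ (sub_pos.2 hlt)] at this
    linarith
  · have := hf.lt_slope_of_hasDerivAt hc hy hgt hf'
    rw [slope_def_field, lt_div_iff₀ (sub_pos.2 hgt)] at this
    linarith

lemma hasDerivAt_marcumG {x y : ℝ} (hxy : 0 < 1 + 4 * x * y) (hy : y ≠ 0) :
    HasDerivAt (marcumG x) (1 - 2 * x / (1 + √(1 + 4 * x * y)) - 1 / y) y := by
  have hsqrt : HasDerivAt (fun y => √(1 + 4 * x * y)) (4 * x / (2 * √(1 + 4 * x * y))) y := by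
    simpa using (((hasDerivAt_id y).const_mul (4 * x)).const_add 1).sqrt hxy.ne'
  have hquot : HasDerivAt (fun y => (1 + √(1 + 4 * x * y)) / (2 * y))
      ((4 * x / (2 * √(1 + 4 * x * y)) * (2 * y) - (1 + √(1 + 4 * x * y)) * 2) / (2 * y) ^ 2) y := by
    simpa using (hsqrt.const_add 1).fun_div ((hasDerivAt_id y).const_mul 2) (by simpa using hy)
  refine ((((hasDerivAt_id y).const_add x).fun_sub hsqrt).fun_add
    (hquot.log (by positivity))).congr_deriv ?_
  have : 1 + √(1 + 4 * x * y) ≠ 0 := by positivity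
  field_simp
  ring

lemma deriv_marcumG {x y : ℝ} (hxy : 0 < 1 + 4 * x * y) (hy : y ≠ 0) :
    deriv (marcumG x) y =
      (y - 2 * x * y - 1 + (y - 1) * √(1 + 4 * x * y)) / (y * (1 + √(1 + 4 * x * y))) := by
  have : 1 + √(1 + 4 * x * y) ≠ 0 := by positivity
  rw [(hasDerivAt_marcumG hxy hy).deriv]
  field_simp
  ring

lemma strictMonoOn_deriv_marcumG {x : ℝ} (hx : 0 ≤ x) :
    StrictMonoOn (deriv (marcumG x)) (Ioi 0) := by
  intro a (ha : 0 < a) b (hb : 0 < b) hab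
  rw [(hasDerivAt_marcumG (by positivity) ha.ne').deriv,
    (hasDerivAt_marcumG (by positivity) hb.ne').deriv]
  have hsqrt : 2 * x / (1 + √(1 + 4 * x * b)) ≤ 2 * x / (1 + √(1 + 4 * x * a)) := by gcongr
  have hinv : 1 / b < 1 / a := by gcongr
  linarith

lemma strictConvexOn_marcumG {x : ℝ} (hx : 0 ≤ x) : StrictConvexOn ℝ (Ioi 0) (marcumG x) := by
  refine StrictMonoOn.strictConvexOn_of_deriv (convex_Ioi 0) (fun y (hy : 0 < y) => ?_)
    (by rw [interior_Ioi]; exact strictMonoOn_deriv_marcumG hx)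
  exact (hasDerivAt_marcumG (by positivity) hy.ne').continuousAt.continuousWithinAt

lemma sqrt_one_add_four_mul_mul_add_one {x : ℝ} (hx : -1 / 2 ≤ x) :
    √(1 + 4 * x * (x + 1)) = 2 * x + 1 := by
  rw [show 1 + 4 * x * (x + 1) = (2 * x + 1) ^ 2 by ring, sqrt_sq (by linarith)]

lemma marcumG_self_add_one {x : ℝ} (hx : -1 / 2 ≤ x) : marcumG x (x + 1) = 0 := by
  have : x + 1 ≠ 0 := by linarith
  rw [marcumG, sqrt_one_add_four_mul_mul_add_one hx,
    show (1 + (2 * x + 1)) / (2 * (x + 1)) = 1 by field_simp; ring, log_one]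
  ring

lemma hasDerivAt_marcumG_self_add_one {x : ℝ} (hx : -1 / 2 < x) :
    HasDerivAt (marcumG x) 0 (x + 1) := by
  have h := hasDerivAt_marcumG (x := x) (y := x + 1) (by nlinarith) (by linarith)
  rw [sqrt_one_add_four_mul_mul_add_one hx.le, show 1 + (2 * x + 1) = 2 * (x + 1) by ring] at h
  have : x + 1 ≠ 0 := by linarith
  convert h using 1
  field_simp
  ring

theorem g_properties (x : ℝ) (hx : 0 < x) :
    let g : ℝ → ℝ := fun y =>
      x + y - Real.sqrt (1 + 4 * x * y) +
        Real.log ((1 + Real.sqrt (1 + 4 * x * y)) / (2 * y))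
    (∀ y : ℝ, 0 < y → deriv g y =
        (y - 2 * x * y - 1 + (y - 1) * Real.sqrt (1 + 4 * x * y)) /
          (y * (1 + Real.sqrt (1 + 4 * x * y)))) ∧
    g (x + 1) = 0 ∧ deriv g (x + 1) = 0 ∧
    ConvexOn ℝ (Set.Ioi 0) g ∧
    ∀ y : ℝ, 0 < y → 0 ≤ g y ∧ (g y = 0 ↔ y = x + 1) := by
  intro g
  have hx' : -1 / 2 < x := by linarith
  have hconvex := strictConvexOn_marcumG hx.le
  have hzero := marcumG_self_add_one hx'.le
  have hcrit := hasDerivAt_marcumG_self_add_one hx'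
  have hpos : ∀ y, 0 < y → y ≠ x + 1 → 0 < marcumG x y := fun y hy hne =>
    hzero ▸ hconvex.lt_of_hasDerivAt_eq_zero (mem_Ioi.2 (by linarith)) hy hne hcrit
  refine ⟨fun y hy => deriv_marcumG (by positivity) hy.ne', hzero, hcrit.deriv,
    hconvex.convexOn, fun y hy => ?_⟩
  rcases eq_or_ne y (x + 1) with rfl | hne
  · exact ⟨hzero.ge, iff_of_true hzero rfl⟩
  · exact ⟨(hpos y hy hne).le, iff_of_false (hpos y hy hne).ne' hne⟩
end

section
/- Let y > 0 be fixed and define f(x) = x + y − √(1+4xy) + ln((1+√(1+4xy))/(2y)) for x ≥ 0. Then f'(x) = (1 − 2y + √(1+4xy))/(1 + √(1+4xy)); if y < 1 then f is strictly increasing on (0,∞); if y > 1 then f has a unique minimum at x = y − 1 where f and f' both vanish, and f''(y−1) = 1/(2y−1). -/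
/-!
Write `s = √(1 + 4xy)`. Since `ds/dx = 2y/s`, one gets
`f' = 1 - 2y/(1 + s) = (s - (2y - 1))/(1 + s)`, so `f'` has the sign of `x - (y - 1)`,
because `s² - (2y - 1)² = 4y(x - (y - 1))`. At `x = y - 1` we have `s = 2y - 1`, which makes
`f` and `f'` vanish there, and `f'' = 4y²/(s(1 + s)²)` gives `f''(y - 1) = 1/(2y - 1)`.
-/

open Real Set Filter Topology

namespace MarcumQInversion

noncomputable def f (y x : ℝ) : ℝ :=
  x + y - √(1 + 4 * x * y) + log ((1 + √(1 + 4 * x * y)) / (2 * y))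

variable {x y : ℝ}

theorem continuous_f (hy : y ≠ 0) : Continuous (f y) := by
  refine (by fun_prop : Continuous fun x => x + y - √(1 + 4 * x * y)).add
    (Continuous.log (by fun_prop) fun x => ?_)
  have : 0 < 1 + √(1 + 4 * x * y) := by positivity
  exact div_ne_zero this.ne' (mul_ne_zero two_ne_zero hy)

theorem hasDerivAt_sqrt_one_add_four_mul_mul (hx : 0 < 1 + 4 * x * y) :
    HasDerivAt (fun x => √(1 + 4 * x * y)) (2 * y / √(1 + 4 * x * y)) x := by
  have hlin : HasDerivAt (fun x => 1 + 4 * x * y) (4 * y) x := by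
    simpa using (((hasDerivAt_id' x).const_mul 4).mul_const y).const_add 1
  convert hlin.sqrt hx.ne' using 1
  field_simp
  ring

theorem hasDerivAt_f (hy : y ≠ 0) (hx : 0 < 1 + 4 * x * y) :
    HasDerivAt (f y) ((1 - 2 * y + √(1 + 4 * x * y)) / (1 + √(1 + 4 * x * y))) x := by
  have hs := hasDerivAt_sqrt_one_add_four_mul_mul hx
  have hs_pos : 0 < √(1 + 4 * x * y) := sqrt_pos.mpr hx
  have h1s : 0 < 1 + √(1 + 4 * x * y) := by positivity
  have hlog := ((hs.const_add 1).div_const (2 * y)).log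
    (div_ne_zero h1s.ne' (mul_ne_zero two_ne_zero hy))
  refine ((((hasDerivAt_id' x).add_const y).sub hs).add hlog).congr_deriv ?_
  generalize √(1 + 4 * x * y) = s at hs_pos h1s ⊢
  field_simp
  ring

theorem hasDerivAt_deriv_f (hy : y ≠ 0) (hx : 0 < 1 + 4 * x * y) :
    HasDerivAt (deriv (f y))
      (4 * y ^ 2 / (√(1 + 4 * x * y) * (1 + √(1 + 4 * x * y)) ^ 2)) x := by
  have hs := hasDerivAt_sqrt_one_add_four_mul_mul hx
  have hs_pos : 0 < √(1 + 4 * x * y) := sqrt_pos.mpr hx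
  have h1s : 0 < 1 + √(1 + 4 * x * y) := by positivity
  have hderiv : deriv (f y) =ᶠ[𝓝 x]
      fun t => (1 - 2 * y + √(1 + 4 * t * y)) / (1 + √(1 + 4 * t * y)) := by
    have hopen : IsOpen {t : ℝ | 0 < 1 + 4 * t * y} := isOpen_lt continuous_const (by fun_prop)
    filter_upwards [hopen.mem_nhds hx] with t ht
    exact (hasDerivAt_f hy ht).deriv
  refine HasDerivAt.congr_of_eventuallyEq ?_ hderiv
  refine ((hs.const_add (1 - 2 * y)).div (hs.const_add 1) h1s.ne').congr_deriv ?_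
  generalize √(1 + 4 * x * y) = s at hs_pos h1s ⊢
  field_simp
  ring

theorem strictMonoOn_f (hy : 0 < y) : StrictMonoOn (f y) (Ici (y - 1)) := by
  refine strictMonoOn_of_deriv_pos (convex_Ici _) (continuous_f hy.ne').continuousOn
    fun x hx => ?_
  rw [interior_Ici, mem_Ioi] at hx
  have hx' : 0 < 1 + 4 * x * y := by nlinarith [sq_nonneg (2 * y - 1)]
  have hs : 2 * y - 1 < √(1 + 4 * x * y) := by
    nlinarith [sq_sqrt hx'.le, sqrt_nonneg (1 + 4 * x * y)]
  rw [(hasDerivAt_f hy.ne' hx').deriv]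
  exact div_pos (by linarith) (by positivity)

theorem strictAntiOn_f (hy : 0 < y) : StrictAntiOn (f y) (Icc 0 (y - 1)) := by
  refine strictAntiOn_of_deriv_neg (convex_Icc _ _) (continuous_f hy.ne').continuousOn
    fun x hx => ?_
  rw [interior_Icc] at hx
  obtain ⟨hx0, hx1⟩ := hx
  have hx' : 0 < 1 + 4 * x * y := by nlinarith
  have hs : √(1 + 4 * x * y) < 2 * y - 1 := by
    nlinarith [sq_sqrt hx'.le, sqrt_nonneg (1 + 4 * x * y)]
  rw [(hasDerivAt_f hy.ne' hx').deriv]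
  exact div_neg_of_neg_of_pos (by linarith) (by positivity)

theorem f_sub_one_lt (hy : 1 ≤ y) (hx : 0 ≤ x) (hne : x ≠ y - 1) : f y (y - 1) < f y x := by
  rcases hne.lt_or_gt with h | h
  · exact strictAntiOn_f (by linarith) ⟨hx, h.le⟩ (right_mem_Icc.mpr (by linarith)) h
  · exact strictMonoOn_f (by linarith) self_mem_Ici h.le h

theorem sqrt_one_add_four_mul_sub_one_mul (hy : 1 / 2 ≤ y) :
    √(1 + 4 * (y - 1) * y) = 2 * y - 1 := by
  rw [show 1 + 4 * (y - 1) * y = (2 * y - 1) ^ 2 by ring]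
  exact sqrt_sq (by linarith)

theorem f_sub_one (hy : 1 / 2 ≤ y) : f y (y - 1) = 0 := by
  have : y ≠ 0 := by positivity
  have h_one : (1 + (2 * y - 1)) / (2 * y) = 1 := by field_simp; ring
  rw [f, sqrt_one_add_four_mul_sub_one_mul hy, h_one, log_one]
  ring

theorem one_add_four_mul_sub_one_mul_pos (hy : 1 / 2 < y) : 0 < 1 + 4 * (y - 1) * y := by
  nlinarith

theorem deriv_f_sub_one (hy : 1 / 2 < y) : deriv (f y) (y - 1) = 0 := by
  rw [(hasDerivAt_f (by positivity) (one_add_four_mul_sub_one_mul_pos hy)).deriv,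
    sqrt_one_add_four_mul_sub_one_mul hy.le]
  ring

theorem deriv_deriv_f_sub_one (hy : 1 / 2 < y) :
    deriv (deriv (f y)) (y - 1) = 1 / (2 * y - 1) := by
  have : 0 < 2 * y - 1 := by linarith
  rw [(hasDerivAt_deriv_f (by positivity) (one_add_four_mul_sub_one_mul_pos hy)).deriv,
    sqrt_one_add_four_mul_sub_one_mul hy.le]
  field_simp
  ring

end MarcumQInversion

open MarcumQInversion in
theorem f_properties (y : ℝ) (hy : 0 < y) :
    let f : ℝ → ℝ := fun x =>
      x + y - Real.sqrt (1 + 4 * x * y) +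
        Real.log ((1 + Real.sqrt (1 + 4 * x * y)) / (2 * y))
    (∀ x : ℝ, 0 < x → deriv f x =
        (1 - 2 * y + Real.sqrt (1 + 4 * x * y)) / (1 + Real.sqrt (1 + 4 * x * y))) ∧
    (y < 1 → StrictMonoOn f (Set.Ioi 0)) ∧
    (1 < y → f (y - 1) = 0 ∧ deriv f (y - 1) = 0 ∧
      deriv (deriv f) (y - 1) = 1 / (2 * y - 1) ∧
      ∀ x ∈ Set.Ici (0 : ℝ), x ≠ y - 1 → f (y - 1) < f x) := by
  change (∀ x : ℝ, 0 < x → deriv (f y) x = _) ∧ (y < 1 → StrictMonoOn (f y) _) ∧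
    (1 < y → f y (y - 1) = 0 ∧ deriv (f y) (y - 1) = 0 ∧ deriv (deriv (f y)) (y - 1) = _ ∧
      ∀ x ∈ Set.Ici (0 : ℝ), x ≠ y - 1 → f y (y - 1) < f y x)
  refine ⟨fun x hx => (hasDerivAt_f hy.ne' (by positivity)).deriv,
    fun hy1 => (strictMonoOn_f hy).mono fun x hx => ?_,
    fun hy1 => ⟨f_sub_one (by linarith), deriv_f_sub_one (by linarith),
      deriv_deriv_f_sub_one (by linarith), fun x hx => f_sub_one_lt hy1.le hx⟩⟩
  exact mem_Ici.mpr (by linarith [mem_Ioi.mp hx])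
end
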